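/- arXiv:2308.12506 — 2 statements merged into one kernel-verified Lean document; each statement's English description precedes it below -/
import Mathlib

section
/- If Y is a real-valued random variable such that E[Y f(Y)] = E[f'(Y)] for every continuously differentiable, bounded function f with bounded derivative, then Y has the standard normal distribution N(0,1). -/
open MeasureTheory ProbabilityTheory Real Set Filter
open scoped BoundedContinuousFunction

/-!
For bounded continuous `h` let `m = E h(Z)`, `Z ~ N(0,1)`. The Stein equation
`f' x - x f x = h x - m` is solved by `f x = exp (x²/2) ∫_{-∞}^x (h t - m) exp (-t²/2) dt`.
Since `h - m` has Gaussian mean zero the integral may equally be taken over `(x, ∞)`, and the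
tail bounds `∫_x^∞ exp (-t²/2) ≤ √(2π) exp (-x²/2)` and `x ∫_x^∞ exp (-t²/2) ≤ exp (-x²/2)`
show that `f` and `x f x`, hence `f'`, are bounded. Stein's identity for this `f` gives
`E h(Y) = m`, and the integrals of bounded continuous functions determine a law.
-/

lemma integrable_exp_neg_sq_div_two : Integrable fun t : ℝ => rexp (-t ^ 2 / 2) := by
  convert integrable_exp_neg_mul_sq (b := 1 / 2) (by norm_num) using 2 with t
  ring_nf

lemma integral_exp_neg_sq_div_two : ∫ t : ℝ, rexp (-t ^ 2 / 2) = √(2 * π) := by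
  convert integral_gaussian (1 / 2) using 2
  · ring_nf
  · ring_nf

lemma integrable_mul_exp_neg_sq_div_two : Integrable fun t : ℝ => t * rexp (-t ^ 2 / 2) := by
  convert integrable_mul_exp_neg_mul_sq (b := 1 / 2) (by norm_num) using 2 with t
  ring_nf

lemma hasDerivAt_exp_neg_sq_div_two (x : ℝ) :
    HasDerivAt (fun t : ℝ => rexp (-t ^ 2 / 2)) (-x * rexp (-x ^ 2 / 2)) x := by
  convert ((hasDerivAt_pow 2 x).fun_neg.div_const 2).exp using 1
  ring

lemma integral_Ioi_mul_exp_neg_sq_div_two (x : ℝ) :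
    ∫ t in Ioi x, t * rexp (-t ^ 2 / 2) = rexp (-x ^ 2 / 2) := by
  have hlim : Tendsto (fun t : ℝ => -rexp (-t ^ 2 / 2)) atTop (nhds (-0)) :=
    (tendsto_exp_atBot.comp <| (tendsto_neg_atTop_atBot.comp
      (tendsto_pow_atTop two_ne_zero)).atBot_div_const two_pos).neg
  rw [integral_Ioi_of_hasDerivAt_of_tendsto' (fun t _ => ?_)
    integrable_mul_exp_neg_sq_div_two.integrableOn hlim]
  · ring
  · simpa only [neg_mul, neg_neg] using (hasDerivAt_exp_neg_sq_div_two t).fun_neg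

lemma integral_Iic_exp_neg_sq_div_two (x : ℝ) :
    ∫ t in Iic x, rexp (-t ^ 2 / 2) = ∫ t in Ioi (-x), rexp (-t ^ 2 / 2) := by
  rw [← integral_comp_neg_Iic]
  simp

-- For `t ≥ x ≥ 0`, `t ^ 2 ≥ x ^ 2 + (t - x) ^ 2`.
lemma integral_Ioi_exp_neg_sq_div_two_le {x : ℝ} (hx : 0 ≤ x) :
    ∫ t in Ioi x, rexp (-t ^ 2 / 2) ≤ √(2 * π) * rexp (-x ^ 2 / 2) := by
  have hshift : Integrable fun t : ℝ => rexp (-x ^ 2 / 2) * rexp (-(t - x) ^ 2 / 2) :=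
    (integrable_exp_neg_sq_div_two.comp_sub_right x).const_mul _
  calc ∫ t in Ioi x, rexp (-t ^ 2 / 2)
      ≤ ∫ t in Ioi x, rexp (-x ^ 2 / 2) * rexp (-(t - x) ^ 2 / 2) := by
        refine setIntegral_mono_on integrable_exp_neg_sq_div_two.integrableOn
          hshift.integrableOn measurableSet_Ioi fun t ht => ?_
        rw [← exp_add, exp_le_exp]
        nlinarith [ht.out.le]
    _ ≤ ∫ t, rexp (-x ^ 2 / 2) * rexp (-(t - x) ^ 2 / 2) :=
        setIntegral_le_integral hshift (.of_forall fun t => by positivity)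
    _ = √(2 * π) * rexp (-x ^ 2 / 2) := by
        rw [integral_const_mul, integral_sub_right_eq_self (fun t => rexp (-t ^ 2 / 2)) x,
          integral_exp_neg_sq_div_two, mul_comm]

lemma mul_integral_Ioi_exp_neg_sq_div_two_le (x : ℝ) :
    x * ∫ t in Ioi x, rexp (-t ^ 2 / 2) ≤ rexp (-x ^ 2 / 2) := by
  rw [← integral_const_mul, ← integral_Ioi_mul_exp_neg_sq_div_two x]
  refine setIntegral_mono_on (integrable_exp_neg_sq_div_two.integrableOn.const_mul x)
    integrable_mul_exp_neg_sq_div_two.integrableOn measurableSet_Ioi fun t ht => ?_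
  exact mul_le_mul_of_nonneg_right ht.out.le (exp_pos _).le

lemma exp_sq_div_two_mul_exp_neg_sq_div_two (x : ℝ) :
    rexp (x ^ 2 / 2) * rexp (-x ^ 2 / 2) = 1 := by
  rw [← exp_add, neg_div, add_neg_cancel, exp_zero]

lemma hasDerivAt_integral_Iic {g : ℝ → ℝ} (hint : Integrable g) (hcont : Continuous g)
    (x : ℝ) : HasDerivAt (fun y => ∫ t in Iic y, g t) (g x) x := by
  have hsplit :
      (fun y => ∫ t in Iic y, g t) = fun y => (∫ t in Iic 0, g t) + ∫ t in 0..y, g t := by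
    ext y
    rw [← intervalIntegral.integral_Iic_sub_Iic hint.integrableOn hint.integrableOn]
    ring
  rw [hsplit]
  exact (intervalIntegral.integral_hasDerivAt_right hint.intervalIntegrable
    hcont.stronglyMeasurable.stronglyMeasurableAtFilter hcont.continuousAt).const_add _

section SteinSolution

variable {g : ℝ → ℝ} {C : ℝ}

lemma integrable_mul_exp_neg_sq_div_two_of_abs_le (hg : AEStronglyMeasurable g)
    (hC : ∀ x, |g x| ≤ C) : Integrable fun t => g t * rexp (-t ^ 2 / 2) :=
  integrable_exp_neg_sq_div_two.bdd_mul hg (.of_forall hC)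

lemma abs_setIntegral_mul_exp_neg_sq_div_two_le (hC : ∀ x, |g x| ≤ C) (s : Set ℝ) :
    |∫ t in s, g t * rexp (-t ^ 2 / 2)| ≤ C * ∫ t in s, rexp (-t ^ 2 / 2) := by
  rw [← integral_const_mul, ← Real.norm_eq_abs]
  refine norm_integral_le_of_norm_le (integrable_exp_neg_sq_div_two.integrableOn.const_mul C)
    (.of_forall fun t => ?_)
  rw [norm_mul, norm_of_nonneg (exp_pos _).le]
  exact mul_le_mul_of_nonneg_right (hC t) (exp_pos _).le

lemma abs_integral_Iic_mul_exp_neg_sq_div_two_le (hg : AEStronglyMeasurable g)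
    (hC : ∀ x, |g x| ≤ C) (hmean : ∫ t, g t * rexp (-t ^ 2 / 2) = 0) (x : ℝ) :
    |∫ t in Iic x, g t * rexp (-t ^ 2 / 2)| ≤ C * ∫ t in Ioi |x|, rexp (-t ^ 2 / 2) := by
  rcases le_or_gt 0 x with hx | hx
  · have hint := integrable_mul_exp_neg_sq_div_two_of_abs_le hg hC
    have hcompl : ∫ t in Iic x, g t * rexp (-t ^ 2 / 2)
        = -∫ t in Ioi x, g t * rexp (-t ^ 2 / 2) := by
      rw [eq_neg_iff_add_eq_zero, ← hmean]
      exact intervalIntegral.integral_Iic_add_Ioi hint.integrableOn hint.integrableOn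
    rw [hcompl, abs_neg, abs_of_nonneg hx]
    exact abs_setIntegral_mul_exp_neg_sq_div_two_le hC _
  · rw [abs_of_neg hx, ← integral_Iic_exp_neg_sq_div_two]
    exact abs_setIntegral_mul_exp_neg_sq_div_two_le hC _

variable (g) in
/-- Solves `f' x - x * f x = g x`, which reads `(exp (-x ^ 2 / 2) * f x)' = g x * exp (-x ^ 2 / 2)`.
-/
noncomputable def steinSolution (x : ℝ) : ℝ :=
  rexp (x ^ 2 / 2) * ∫ t in Iic x, g t * rexp (-t ^ 2 / 2)

lemma hasDerivAt_steinSolution (hg : Continuous g)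
    (hint : Integrable fun t => g t * rexp (-t ^ 2 / 2)) (x : ℝ) :
    HasDerivAt (steinSolution g) (x * steinSolution g x + g x) x := by
  have hexp : HasDerivAt (fun y : ℝ => rexp (y ^ 2 / 2)) (x * rexp (x ^ 2 / 2)) x := by
    convert ((hasDerivAt_pow 2 x).div_const 2).exp using 1
    ring
  have hprim := hasDerivAt_integral_Iic hint (hg.mul (continuous_exp.comp (by fun_prop))) x
  refine (hexp.mul hprim).congr_deriv ?_
  rw [steinSolution, mul_left_comm _ (g x), exp_sq_div_two_mul_exp_neg_sq_div_two]
  ring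

lemma abs_steinSolution_le (hg : AEStronglyMeasurable g) (hC : ∀ x, |g x| ≤ C)
    (hmean : ∫ t, g t * rexp (-t ^ 2 / 2) = 0) (x : ℝ) :
    |steinSolution g x| ≤ C * √(2 * π) := by
  have hC0 : 0 ≤ C := (abs_nonneg _).trans (hC 0)
  calc |steinSolution g x|
      = rexp (x ^ 2 / 2) * |∫ t in Iic x, g t * rexp (-t ^ 2 / 2)| := by
        rw [steinSolution, abs_mul, abs_of_pos (exp_pos _)]
    _ ≤ rexp (x ^ 2 / 2) * (C * (√(2 * π) * rexp (-|x| ^ 2 / 2))) := by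
        gcongr
        exact (abs_integral_Iic_mul_exp_neg_sq_div_two_le hg hC hmean x).trans
          (mul_le_mul_of_nonneg_left (integral_Ioi_exp_neg_sq_div_two_le (abs_nonneg x)) hC0)
    _ = C * √(2 * π) * (rexp (x ^ 2 / 2) * rexp (-x ^ 2 / 2)) := by rw [sq_abs]; ring
    _ = C * √(2 * π) := by rw [exp_sq_div_two_mul_exp_neg_sq_div_two, mul_one]

lemma abs_mul_steinSolution_le (hg : AEStronglyMeasurable g) (hC : ∀ x, |g x| ≤ C)
    (hmean : ∫ t, g t * rexp (-t ^ 2 / 2) = 0) (x : ℝ) :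
    |x * steinSolution g x| ≤ C := by
  have hC0 : 0 ≤ C := (abs_nonneg _).trans (hC 0)
  calc |x * steinSolution g x|
      = rexp (x ^ 2 / 2) * (|x| * |∫ t in Iic x, g t * rexp (-t ^ 2 / 2)|) := by
        rw [steinSolution, abs_mul, abs_mul, abs_of_pos (exp_pos _)]
        ring
    _ ≤ rexp (x ^ 2 / 2) * (C * rexp (-|x| ^ 2 / 2)) := by
        refine mul_le_mul_of_nonneg_left ?_ (exp_pos _).le
        calc |x| * |∫ t in Iic x, g t * rexp (-t ^ 2 / 2)|
            ≤ |x| * (C * ∫ t in Ioi |x|, rexp (-t ^ 2 / 2)) := by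
              gcongr
              exact abs_integral_Iic_mul_exp_neg_sq_div_two_le hg hC hmean x
          _ = C * (|x| * ∫ t in Ioi |x|, rexp (-t ^ 2 / 2)) := by ring
          _ ≤ C * rexp (-|x| ^ 2 / 2) := by
              gcongr
              exact mul_integral_Ioi_exp_neg_sq_div_two_le |x|
    _ = C * (rexp (x ^ 2 / 2) * rexp (-x ^ 2 / 2)) := by rw [sq_abs]; ring
    _ = C := by rw [exp_sq_div_two_mul_exp_neg_sq_div_two, mul_one]

end SteinSolution

section SteinIdentity

variable {Ω : Type*} [MeasurableSpace Ω]

def SatisfiesSteinIdentity (μ : Measure Ω) (Y : Ω → ℝ) : Prop :=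
  ∀ f : ℝ → ℝ, ContDiff ℝ 1 f →
    (∃ Cf : ℝ, ∀ x, |f x| ≤ Cf) → (∃ Cf' : ℝ, ∀ x, |deriv f x| ≤ Cf') →
    ∫ ω, Y ω * f (Y ω) ∂μ = ∫ ω, deriv f (Y ω) ∂μ

variable {μ : Measure Ω} {Y : Ω → ℝ}

lemma SatisfiesSteinIdentity.integral_comp_eq_zero [IsFiniteMeasure μ]
    (hstein : SatisfiesSteinIdentity μ Y) (hY : Measurable Y) {g : ℝ → ℝ} {C : ℝ}
    (hg : Continuous g) (hC : ∀ x, |g x| ≤ C) (hmean : ∫ t, g t * rexp (-t ^ 2 / 2) = 0) :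
    ∫ ω, g (Y ω) ∂μ = 0 := by
  set f := steinSolution g
  have hf x := hasDerivAt_steinSolution hg
    (integrable_mul_exp_neg_sq_div_two_of_abs_le hg.aestronglyMeasurable hC) x
  have hderiv : deriv f = fun x => x * f x + g x := funext fun x => (hf x).deriv
  have hdiff : Differentiable ℝ f := fun x => (hf x).differentiableAt
  have hC1 : ContDiff ℝ 1 f :=
    contDiff_one_iff_deriv.2 ⟨hdiff, hderiv ▸ (continuous_id.mul hdiff.continuous).add hg⟩
  have hf_le := abs_steinSolution_le hg.aestronglyMeasurable hC hmean
  have hmul_le := abs_mul_steinSolution_le hg.aestronglyMeasurable hC hmean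
  have hderiv_le x : |deriv f x| ≤ C + C := by
    rw [hderiv]
    exact (abs_add_le _ _).trans (add_le_add (hmul_le x) (hC x))
  have hint_mul : Integrable (fun ω => Y ω * f (Y ω)) μ :=
    .of_bound ((continuous_id.mul hdiff.continuous).measurable.comp hY).aestronglyMeasurable C
      (.of_forall fun ω => hmul_le (Y ω))
  have hint_g : Integrable (fun ω => g (Y ω)) μ :=
    .of_bound (hg.measurable.comp hY).aestronglyMeasurable C (.of_forall fun ω => hC (Y ω))
  have hid := hstein f hC1 ⟨_, hf_le⟩ ⟨_, hderiv_le⟩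
  rw [hderiv, integral_add hint_mul hint_g] at hid
  linarith

lemma integral_gaussianReal_zero_one (h : ℝ → ℝ) :
    ∫ x, h x ∂gaussianReal 0 1 = (√(2 * π))⁻¹ * ∫ x, h x * rexp (-x ^ 2 / 2) := by
  rw [integral_gaussianReal_eq_integral_smul one_ne_zero, ← integral_const_mul]
  congr 1 with x
  simp [gaussianPDFReal]
  ring

theorem SatisfiesSteinIdentity.integral_comp_eq_integral_gaussianReal [IsProbabilityMeasure μ]
    (hstein : SatisfiesSteinIdentity μ Y) (hY : Measurable Y) (h : ℝ →ᵇ ℝ) :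
    ∫ ω, h (Y ω) ∂μ = ∫ x, h x ∂gaussianReal 0 1 := by
  set m := ∫ x, h x ∂gaussianReal 0 1
  have hcentered : ∫ x, (h x - m) ∂gaussianReal 0 1 = 0 := by
    rw [integral_sub (h.integrable _) (integrable_const m)]
    simp [m]
  have hmean : ∫ t, (h t - m) * rexp (-t ^ 2 / 2) = 0 := by
    rw [integral_gaussianReal_zero_one] at hcentered
    exact (mul_eq_zero.1 hcentered).resolve_left (by positivity)
  have hbound x : |h x - m| ≤ ‖h‖ + |m| :=
    (abs_sub _ _).trans (add_le_add (h.norm_coe_le_norm x) le_rfl)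
  have hzero := hstein.integral_comp_eq_zero hY (g := fun x => h x - m)
    (h.continuous.sub continuous_const) hbound hmean
  have hint : Integrable (fun ω => h (Y ω)) μ :=
    .of_bound (h.continuous.measurable.comp hY).aestronglyMeasurable ‖h‖
      (.of_forall fun ω => h.norm_coe_le_norm (Y ω))
  rw [integral_sub hint (integrable_const m)] at hzero
  simpa [sub_eq_zero] using hzero

end SteinIdentity

theorem gaussian_of_stein_identity_general
    {Ω : Type*} [MeasurableSpace Ω] (μ : Measure Ω) [IsProbabilityMeasure μ]
    (Y : Ω → ℝ) (hYmeas : Measurable Y)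
    (hstein : ∀ f : ℝ → ℝ, ContDiff ℝ 1 f →
      (∃ Cf : ℝ, ∀ x, |f x| ≤ Cf) → (∃ Cf' : ℝ, ∀ x, |deriv f x| ≤ Cf') →
      ∫ ω, Y ω * f (Y ω) ∂μ = ∫ ω, deriv f (Y ω) ∂μ) :
    Measure.map Y μ = gaussianReal 0 1 := by
  have : IsProbabilityMeasure (μ.map Y) := Measure.isProbabilityMeasure_map hYmeas.aemeasurable
  refine ext_of_forall_integral_eq_of_IsFiniteMeasure fun h => ?_
  rw [integral_map hYmeas.aemeasurable h.continuous.aestronglyMeasurable]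
  exact SatisfiesSteinIdentity.integral_comp_eq_integral_gaussianReal hstein hYmeas h

/-- Stein's characterization (converse direction): if `E[Y f(Y)] = E[f'(Y)]` for every
continuously differentiable bounded `f` with bounded derivative, then `Y ~ N(0,1)`. -/
theorem gaussian_of_stein_identity
    {Ω : Type*} [MeasurableSpace Ω] (μ : Measure Ω) [IsProbabilityMeasure μ]
    (Y : Ω → ℝ) (hYmeas : Measurable Y)
    (hYint : Integrable Y μ) (hY2 : MemLp Y 2 μ)
    (hstein : ∀ f : ℝ → ℝ, ContDiff ℝ 1 f →
      (∃ Cf : ℝ, ∀ x, |f x| ≤ Cf) → (∃ Cf' : ℝ, ∀ x, |deriv f x| ≤ Cf') →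
      ∫ ω, Y ω * f (Y ω) ∂μ = ∫ ω, deriv f (Y ω) ∂μ) :
    Measure.map Y μ = gaussianReal 0 1 :=
  gaussian_of_stein_identity_general μ Y hYmeas hstein
end

section
/- Let α : ℕ → [0,1] be non-increasing with α(0) = 1 and α(m) → 0, and define α⁻¹(u) = max{m ≥ 0 : α(m) > u} for u ∈ (0,1). Then for any Borel function f : (0,1) → [0,∞) and any integer q ≥ 1: (i) Σ_{m=1}^∞ m^{q−1} ∫_0^{α(m)} f(u) du ≤ ∫_0^1 [α⁻¹(u)]^q f(u) du, and (ii) ∫_0^1 [α⁻¹(u)]^q du ≤ q Σ_{m=1}^∞ α(m) m^{q−1}. -/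
/-!
For `u ∈ (0,1)` we have `m < α⁻¹(u)` iff `u < α(m+1)`, so `α⁻¹` is the layer-cake sum of the
indicators of the intervals `(0, α(m+1))`. Integrating term by term, both inequalities reduce to
the pointwise bounds `∑_{m<N} (m+1)^(q-1) ≤ N^q ≤ q ∑_{m<N} (m+1)^(q-1)`.
-/

open MeasureTheory

theorem Nat.pow_le_pow_add_mul_pow_sub_one (n q : ℕ) :
    (n + 1) ^ q ≤ n ^ q + q * (n + 1) ^ (q - 1) := by
  have h := abs_pow_sub_pow_le ((n : ℤ) + 1) n q
  have hmax : max |(n : ℤ) + 1| |(n : ℤ)| = n + 1 := by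
    rw [abs_of_nonneg (by positivity), abs_of_nonneg (by positivity)]; simp
  rw [hmax, add_sub_cancel_left, abs_one, one_mul] at h
  zify
  linarith [le_abs_self (((n : ℤ) + 1) ^ q - (n : ℤ) ^ q)]

theorem Nat.pow_le_sum_range_mul_pow_sub_one {q : ℕ} (hq : q ≠ 0) (N : ℕ) :
    N ^ q ≤ ∑ m ∈ Finset.range N, q * (m + 1) ^ (q - 1) := by
  induction N with
  | zero => simp [hq]
  | succ N ih =>
    rw [Finset.sum_range_succ]
    exact (Nat.pow_le_pow_add_mul_pow_sub_one N q).trans (Nat.add_le_add_right ih _)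

theorem Nat.sum_range_pow_sub_one_le_pow {q : ℕ} (hq : q ≠ 0) (N : ℕ) :
    ∑ m ∈ Finset.range N, (m + 1) ^ (q - 1) ≤ N ^ q :=
  calc ∑ m ∈ Finset.range N, (m + 1) ^ (q - 1)
      ≤ ∑ _m ∈ Finset.range N, N ^ (q - 1) :=
        Finset.sum_le_sum fun m hm => Nat.pow_le_pow_left (Finset.mem_range.mp hm) _
    _ = N ^ q := by
        rw [Finset.sum_const, Finset.card_range, smul_eq_mul, ← pow_succ', Nat.succ_eq_add_one,
          Nat.sub_one_add_one hq]

theorem bddAbove_setOf_lt_of_tendsto {β : Type*} [TopologicalSpace β] [LinearOrder β]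
    [ClosedIciTopology β] {α : ℕ → β} {a u : β} (hα : Filter.Tendsto α Filter.atTop (nhds a))
    (hu : a < u) : BddAbove {m | u < α m} := by
  have h : ∀ᶠ m in Filter.cofinite, α m < u := Nat.cofinite_eq_atTop ▸ hα.eventually_lt_const hu
  exact (Filter.eventually_cofinite.mp h).bddAbove.mono fun m hm => not_lt.mpr hm.le

theorem Antitone.lt_iff_le_sSup {β : Type*} [Preorder β] {α : ℕ → β} (hα : Antitone α) {u : β}
    (h0 : u < α 0) (hbdd : BddAbove {m | u < α m}) (k : ℕ) :
    u < α k ↔ k ≤ sSup {m | u < α m} :=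
  ⟨fun hk => le_csSup hbdd hk,
    fun hk => (Nat.sSup_mem ⟨0, h0⟩ hbdd).trans_le (hα hk)⟩

theorem setLIntegral_sum_range_mul_eq_tsum {X : Type*} [MeasurableSpace X] {μ : Measure X}
    {S : Set X} (hS : MeasurableSet S) {s : ℕ → Set X} (hs : ∀ m, MeasurableSet (s m))
    (hsS : ∀ m, s m ⊆ S) {N : X → ℕ} (hN : ∀ x ∈ S, ∀ m, x ∈ s m ↔ m < N x)
    (c : ℕ → ENNReal) {f : X → ENNReal} (hf : Measurable f) :
    ∫⁻ x in S, (∑ m ∈ Finset.range (N x), c m) * f x ∂μ =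
      ∑' m, c m * ∫⁻ x in s m, f x ∂μ :=
  calc ∫⁻ x in S, (∑ m ∈ Finset.range (N x), c m) * f x ∂μ
      = ∫⁻ x in S, ∑' m, (s m).indicator (fun x => c m * f x) x ∂μ := by
        refine setLIntegral_congr_fun hS fun x hx => ?_
        have hzero : ∀ m ∉ Finset.range (N x), (s m).indicator (fun x => c m * f x) x = 0 :=
          fun m hm => Set.indicator_of_notMem (by rwa [hN x hx, ← Finset.mem_range]) _
        rw [tsum_eq_sum hzero, Finset.sum_mul]
        exact Finset.sum_congr rfl fun m hm =>
          (Set.indicator_of_mem ((hN x hx m).mpr (Finset.mem_range.mp hm)) (fun x => c m * f x)).symm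
    _ = ∑' m, ∫⁻ x in S, (s m).indicator (fun x => c m * f x) x ∂μ :=
        lintegral_tsum fun m => ((hf.const_mul _).indicator (hs m)).aemeasurable
    _ = ∑' m, c m * ∫⁻ x in s m, f x ∂μ := by
        refine tsum_congr fun m => ?_
        rw [lintegral_indicator (hs m), Measure.restrict_restrict (hs m),
          Set.inter_eq_self_of_subset_left (hsS m), lintegral_const_mul _ hf]

theorem mixing_inverse_integral_bounds_general
    (α : ℕ → ℝ) (hanti : Antitone α) (hα0 : α 0 = 1)
    (hle : ∀ m, α m ≤ 1)
    (hlim : Filter.Tendsto α Filter.atTop (nhds 0))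
    (αinv : ℝ → ℕ) (hαinv : ∀ u, αinv u = sSup {m : ℕ | u < α m})
    (q : ℕ) (hq : 1 ≤ q)
    (f : ℝ → ENNReal) (hf : Measurable f) :
    (∑' m : ℕ, ((m + 1 : ℕ) : ENNReal) ^ (q - 1) *
        ∫⁻ u in Set.Ioo (0 : ℝ) (α (m + 1)), f u ≤
      ∫⁻ u in Set.Ioo (0 : ℝ) 1, ((αinv u : ENNReal)) ^ q * f u) ∧
    (∫⁻ u in Set.Ioo (0 : ℝ) 1, ((αinv u : ENNReal)) ^ q ≤
      (q : ENNReal) * ∑' m : ℕ, ENNReal.ofReal (α (m + 1)) * ((m + 1 : ℕ) : ENNReal) ^ (q - 1)) := by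
  have hq0 : q ≠ 0 := Nat.one_le_iff_ne_zero.mp hq
  have hlevel : ∀ u ∈ Set.Ioo (0 : ℝ) 1, ∀ m, u ∈ Set.Ioo 0 (α (m + 1)) ↔ m < αinv u := by
    intro u hu m
    rw [Set.mem_Ioo, and_iff_right hu.1, hαinv, hanti.lt_iff_le_sSup (hα0 ▸ hu.2)
      (bddAbove_setOf_lt_of_tendsto hlim hu.1)]
    exact Nat.add_one_le_iff
  have hlayer := fun c {g : ℝ → ENNReal} (hg : Measurable g) =>
    setLIntegral_sum_range_mul_eq_tsum (μ := volume) measurableSet_Ioo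
      (fun _ => measurableSet_Ioo) (fun m u hu => ⟨hu.1, hu.2.trans_le (hle (m + 1))⟩) hlevel c hg
  constructor
  · rw [← hlayer _ hf]
    refine lintegral_mono fun u => mul_le_mul_left ?_ _
    exact_mod_cast Nat.cast_le.mpr (Nat.sum_range_pow_sub_one_le_pow hq0 (αinv u))
  · calc ∫⁻ u in Set.Ioo (0 : ℝ) 1, ((αinv u : ENNReal)) ^ q
        ≤ ∫⁻ u in Set.Ioo (0 : ℝ) 1,
            (∑ m ∈ Finset.range (αinv u), ((q * (m + 1) ^ (q - 1) : ℕ) : ENNReal)) * 1 := by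
          refine lintegral_mono fun u => ?_
          dsimp only
          rw [mul_one]
          exact_mod_cast Nat.pow_le_sum_range_mul_pow_sub_one hq0 (αinv u)
      _ = _ := by
          rw [hlayer _ measurable_const, ← ENNReal.tsum_mul_left]
          refine tsum_congr fun m => ?_
          rw [setLIntegral_one, Real.volume_Ioo, sub_zero]
          push_cast
          ring

/-- Lemma B.1 on mixing coefficients: with `α⁻¹(u) = max{m : α(m) > u}`,
(i) `Σ_{m≥1} m^{q-1} ∫_0^{α(m)} f ≤ ∫_0^1 (α⁻¹(u))^q f(u) du`, and
(ii) `∫_0^1 (α⁻¹(u))^q du ≤ q Σ_{m≥1} α(m) m^{q-1}`. -/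
theorem mixing_inverse_integral_bounds
    (α : ℕ → ℝ) (hanti : Antitone α) (hα0 : α 0 = 1)
    (hnonneg : ∀ m, 0 ≤ α m) (hle : ∀ m, α m ≤ 1)
    (hlim : Filter.Tendsto α Filter.atTop (nhds 0))
    (αinv : ℝ → ℕ) (hαinv : ∀ u, αinv u = sSup {m : ℕ | u < α m})
    (q : ℕ) (hq : 1 ≤ q)
    (f : ℝ → ENNReal) (hf : Measurable f) :
    (∑' m : ℕ, ((m + 1 : ℕ) : ENNReal) ^ (q - 1) *
        ∫⁻ u in Set.Ioo (0 : ℝ) (α (m + 1)), f u ≤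
      ∫⁻ u in Set.Ioo (0 : ℝ) 1, ((αinv u : ENNReal)) ^ q * f u) ∧
    (∫⁻ u in Set.Ioo (0 : ℝ) 1, ((αinv u : ENNReal)) ^ q ≤
      (q : ENNReal) * ∑' m : ℕ, ENNReal.ofReal (α (m + 1)) * ((m + 1 : ℕ) : ENNReal) ^ (q - 1)) :=
  mixing_inverse_integral_bounds_general α hanti hα0 hle hlim αinv hαinv q hq f hf
end
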